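/- arXiv:math/0403008 — 3 statements merged into one kernel-verified Lean document; each statement's English description precedes it below -/
import Mathlib

section
/- Let (Ω, 𝓕, μ) be a probability space and T : Ω → Ω an invertible bimeasurable measure-preserving transformation. Let 𝓒 be a sub-σ-algebra of 𝓕 with T^{-1}𝓒 = 𝓒 (i.e. A ∈ 𝓒 if and only if T^{-1}A ∈ 𝓒), let g : Ω → ℝ be bounded and measurable with ∫ g dμ = 0, and suppose the family of σ-algebras {σ(g∘T^j) : j ∈ ℤ} ∪ {𝓒} is independent. Let h : Ω → ℝ be bounded and 𝓒-measurable and set f = g·h. Then for every k ∈ ℤ, E(f∘T^k | σ(f∘T^j : j ∈ ℤ, j ≠ k)) = 0 μ-almost surely; in particular (f∘T^k)_{k≥0} is a strong martingale difference sequence. -/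
/-!
Put `G_k := σ(𝓒, g∘T^j : j ≠ k)`. Every `f∘T^j = (g∘T^j)·(h∘T^j)` with `j ≠ k` is
`G_k`-measurable, because `h∘T^j` is `𝓒`-measurable by the invariance of `𝓒`. The assumed
independence makes `g∘T^k` independent of `G_k`, so pulling out the `G_k`-measurable factor
`h∘T^k` gives `E(f∘T^k | G_k) = (h∘T^k) · E(g∘T^k) = 0`, and the tower property passes this
to every smaller σ-algebra.
-/

open MeasureTheory ProbabilityTheory Set

/-- The `k`-th iterate (for `k : ℤ`) of an invertible transformation. -/
noncomputable def iterZ {α : Type*} (e : α ≃ α) : ℤ → α → α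
  | Int.ofNat n => (⇑e)^[n]
  | Int.negSucc n => (⇑e.symm)^[n + 1]

section iterZ

variable {α : Type*} [MeasurableSpace α] {e : α ≃ α}

theorem measurable_iterZ (he : Measurable e) (he' : Measurable e.symm) :
    ∀ j, Measurable (iterZ e j)
  | Int.ofNat n => he.iterate n
  | Int.negSucc n => he'.iterate (n + 1)

theorem measurePreserving_iterZ {μ : Measure α} (he : MeasurePreserving e μ μ)
    (he' : Measurable e.symm) : ∀ j, MeasurePreserving (iterZ e j) μ μ
  | Int.ofNat n => he.iterate n
  | Int.negSucc n => (he.symm ⟨e, he.measurable, he'⟩).iterate (n + 1)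

theorem measurable_symm_of_measurableSet_preimage_iff
    (he : ∀ A : Set α, MeasurableSet A ↔ MeasurableSet (e ⁻¹' A)) : Measurable e.symm :=
  fun A hA => (he _).mpr (by rwa [← preimage_comp, e.symm_comp_self, preimage_id])

theorem measurable_iterZ_of_measurableSet_preimage_iff
    (he : ∀ A : Set α, MeasurableSet A ↔ MeasurableSet (e ⁻¹' A)) (j : ℤ) :
    Measurable (iterZ e j) :=
  measurable_iterZ (fun A hA => (he A).mp hA) (measurable_symm_of_measurableSet_preimage_iff he) j

end iterZ

theorem condExp_mul_eq_zero_of_indep {Ω : Type*} {m mX mY m₀ : MeasurableSpace Ω}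
    {μ : Measure Ω} [IsFiniteMeasure μ] {X Y : Ω → ℝ} (hmX : mX ≤ m₀) (hmY : mY ≤ m₀)
    (hm : m ≤ mY) (hindep : Indep mX mY μ) (hX : StronglyMeasurable[mX] X)
    (hXint : Integrable X μ) (hXmean : ∫ ω, X ω ∂μ = 0) (hY : StronglyMeasurable[mY] Y) :
    μ[fun ω => X ω * Y ω | m] =ᵐ[μ] 0 := by
  have hX_cond : μ[X | mY] =ᵐ[μ] 0 := by
    have hX_cond := condExp_indep_eq hmX hmY hX hindep (μ := μ)
    rwa [hXmean] at hX_cond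
  have hXY_cond : μ[X * Y | mY] =ᵐ[μ] 0 := by
    by_cases hXY : Integrable (X * Y) μ
    · filter_upwards [condExp_mul_of_stronglyMeasurable_right hY hXY hXint, hX_cond]
        with ω hω hω'
      simp [hω, hω']
    · rw [condExp_of_not_integrable hXY]
  calc μ[X * Y | m] =ᵐ[μ] μ[μ[X * Y | mY] | m] := (condExp_condExp_of_le hm hmY).symm
    _ =ᵐ[μ] μ[0 | m] := condExp_congr_ae hXY_cond
    _ = 0 := condExp_zero

section ProductProcess

variable {Ω : Type*} {C : MeasurableSpace Ω} {T : Ω ≃ Ω}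
  {g h : Ω → ℝ}

noncomputable abbrev shiftFamily (C : MeasurableSpace Ω) (T : Ω ≃ Ω) (g : Ω → ℝ) :
    Option ℤ → MeasurableSpace Ω :=
  fun o => o.elim C fun j => MeasurableSpace.comap (fun ω => g (iterZ T j ω))
    Real.measurableSpace

theorem shiftFamily_le [mΩ : MeasurableSpace Ω] (hT : Measurable T) (hT' : Measurable T.symm)
    (hC : C ≤ mΩ) (hg : Measurable g) : ∀ o, shiftFamily C T g o ≤ mΩ
  | none => hC
  | some j => (hg.comp (measurable_iterZ hT hT' j)).comap_le

theorem measurable_comp_iterZ_shiftFamily_compl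
    (hCinv : ∀ A : Set Ω, MeasurableSet[C] A ↔ MeasurableSet[C] (T ⁻¹' A))
    (hh : Measurable[C] h) (j k : ℤ) :
    Measurable[⨆ o ∈ ({some k}ᶜ : Set (Option ℤ)), shiftFamily C T g o]
      (fun ω => h (iterZ T j ω)) :=
  (hh.comp (@measurable_iterZ_of_measurableSet_preimage_iff Ω C T hCinv j)).mono
    (le_biSup (shiftFamily C T g) (i := none) (by simp)) le_rfl

theorem comap_mul_comp_iterZ_le_shiftFamily_compl
    (hCinv : ∀ A : Set Ω, MeasurableSet[C] A ↔ MeasurableSet[C] (T ⁻¹' A))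
    (hh : Measurable[C] h) {j k : ℤ} (hjk : j ≠ k) :
    MeasurableSpace.comap (fun ω => g (iterZ T j ω) * h (iterZ T j ω)) Real.measurableSpace ≤
      ⨆ o ∈ ({some k}ᶜ : Set (Option ℤ)), shiftFamily C T g o := by
  refine Measurable.comap_le
    (Measurable.mul ?_ (measurable_comp_iterZ_shiftFamily_compl hCinv hh j k))
  exact (comap_measurable _).mono
    (le_biSup (shiftFamily C T g) (i := some j) (by simpa using hjk)) le_rfl

theorem condExp_mul_comp_iterZ_eq_zero [mΩ : MeasurableSpace Ω] {μ : Measure Ω}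
    [IsProbabilityMeasure μ]
    (hT : MeasurePreserving T μ μ) (hT' : Measurable T.symm) (hC : C ≤ mΩ)
    (hCinv : ∀ A : Set Ω, MeasurableSet[C] A ↔ MeasurableSet[C] (T ⁻¹' A))
    (hg : Measurable g) (hg_int : Integrable g μ) (hgcen : ∫ ω, g ω ∂μ = 0)
    (hindep : iIndep (shiftFamily C T g) μ) (hh : Measurable[C] h) (k : ℤ)
    {m : MeasurableSpace Ω}
    (hm : m ≤ ⨆ o ∈ ({some k}ᶜ : Set (Option ℤ)), shiftFamily C T g o) :
    μ[fun ω => g (iterZ T k ω) * h (iterZ T k ω) | m] =ᵐ[μ] 0 := by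
  -- `C` and `m` are local instances as well; make the ambient σ-algebra the preferred one.
  let := mΩ
  have hF_le := shiftFamily_le hT.measurable hT' hC hg
  have hindep_k := indep_biSup_compl hF_le hindep {some k}
  have hTk := measurePreserving_iterZ hT hT' k
  refine condExp_mul_eq_zero_of_indep (X := fun ω => g (iterZ T k ω))
    (Y := fun ω => h (iterZ T k ω)) (iSup₂_le fun o _ => hF_le o)
    (iSup₂_le fun o _ => hF_le o) hm hindep_k ?_ ?_ ?_ ?_
  · exact ((comap_measurable (fun ω => g (iterZ T k ω))).mono
      (le_biSup (shiftFamily C T g) (mem_singleton (some k))) le_rfl).stronglyMeasurable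
  · exact hTk.integrable_comp_of_integrable hg_int
  · rwa [← integral_map hTk.measurable.aemeasurable hg.aestronglyMeasurable, hTk.map_eq]
  · exact (measurable_comp_iterZ_shiftFamily_compl hCinv hh k k).stronglyMeasurable

end ProductProcess

theorem stmt8_general {Ω : Type*} [mΩ : MeasurableSpace Ω] (μ : Measure Ω) [IsProbabilityMeasure μ]
    (T : Ω ≃ Ω) (hTmeas' : Measurable (⇑T.symm))
    (hT : MeasurePreserving (⇑T) μ μ)
    (C : MeasurableSpace Ω) (hC : C ≤ mΩ)
    (hCinv : ∀ A : Set Ω, MeasurableSet[C] A ↔ MeasurableSet[C] ((⇑T) ⁻¹' A))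
    (g : Ω → ℝ) (hg : Measurable[mΩ] g) (hgbd : ∃ M : ℝ, ∀ ω, |g ω| ≤ M)
    (hgcen : ∫ ω, g ω ∂μ = 0)
    (hindep : iIndep (fun o : Option ℤ =>
      o.elim C fun j => MeasurableSpace.comap (fun ω => g (iterZ T j ω))
        Real.measurableSpace) μ)
    (h : Ω → ℝ) (hh : Measurable[C] h)
    (f : Ω → ℝ) (hf : ∀ ω, f ω = g ω * h ω) :
    (∀ k : ℤ,
      μ[(fun ω => f (iterZ T k ω)) |
        ⨆ j ∈ {j : ℤ | j ≠ k}, MeasurableSpace.comap (fun ω => f (iterZ T j ω))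
          Real.measurableSpace] =ᵐ[μ] 0) ∧
    (∀ k : ℕ,
      μ[(fun ω => f ((⇑T)^[k] ω)) |
        ⨆ j ∈ {j : ℕ | j ≠ k}, MeasurableSpace.comap (fun ω => f ((⇑T)^[j] ω))
          Real.measurableSpace] =ᵐ[μ] 0) := by
  obtain rfl : f = fun ω => g ω * h ω := funext hf
  obtain ⟨M, hM⟩ := hgbd
  have hg_int : Integrable g μ :=
    (integrable_const M).mono' hg.aestronglyMeasurable (ae_of_all _ hM)
  have key := condExp_mul_comp_iterZ_eq_zero (mΩ := mΩ) hT hTmeas' hC hCinv hg hg_int hgcen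
    hindep hh
  refine ⟨fun k => key k (iSup₂_le fun j hj => ?_), fun k => key k (iSup₂_le fun j hj => ?_)⟩
  · exact comap_mul_comp_iterZ_le_shiftFamily_compl hCinv hh hj
  · -- The ℕ-indexed process is the ℤ-indexed one: `iterZ T (j : ℤ)` unfolds to `T^[j]`.
    exact comap_mul_comp_iterZ_le_shiftFamily_compl hCinv hh (j := j) (by exact_mod_cast hj)

/-- If `𝓒` is a `T`-invariant sub-σ-algebra, `g` is a bounded centered random variable such
that the family `{σ(g∘T^j) : j ∈ ℤ} ∪ {𝓒}` is independent, and `h` is bounded and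
`𝓒`-measurable, then `f = g·h` satisfies `E(f∘T^k | σ(f∘T^j : j ≠ k)) = 0` a.s. for every
`k ∈ ℤ`; in particular `(f∘T^k)_{k≥0}` is a strong martingale difference sequence. -/
theorem stmt8 {Ω : Type*} [mΩ : MeasurableSpace Ω] (μ : Measure Ω) [IsProbabilityMeasure μ]
    (T : Ω ≃ Ω) (hTmeas : Measurable (⇑T)) (hTmeas' : Measurable (⇑T.symm))
    (hT : MeasurePreserving (⇑T) μ μ)
    (C : MeasurableSpace Ω) (hC : C ≤ mΩ)
    (hCinv : ∀ A : Set Ω, MeasurableSet[C] A ↔ MeasurableSet[C] ((⇑T) ⁻¹' A))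
    (g : Ω → ℝ) (hg : Measurable[mΩ] g) (hgbd : ∃ M : ℝ, ∀ ω, |g ω| ≤ M)
    (hgcen : ∫ ω, g ω ∂μ = 0)
    (hindep : iIndep (fun o : Option ℤ =>
      o.elim C fun j => MeasurableSpace.comap (fun ω => g (iterZ T j ω))
        Real.measurableSpace) μ)
    (h : Ω → ℝ) (hh : Measurable[C] h) (hhbd : ∃ M : ℝ, ∀ ω, |h ω| ≤ M)
    (f : Ω → ℝ) (hf : ∀ ω, f ω = g ω * h ω) :
    (∀ k : ℤ,
      μ[(fun ω => f (iterZ T k ω)) |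
        ⨆ j ∈ {j : ℤ | j ≠ k}, MeasurableSpace.comap (fun ω => f (iterZ T j ω))
          Real.measurableSpace] =ᵐ[μ] 0) ∧
    (∀ k : ℕ,
      μ[(fun ω => f ((⇑T)^[k] ω)) |
        ⨆ j ∈ {j : ℕ | j ≠ k}, MeasurableSpace.comap (fun ω => f ((⇑T)^[j] ω))
          Real.measurableSpace] =ᵐ[μ] 0) :=
  stmt8_general (mΩ := mΩ) μ T hTmeas' hT C hC hCinv g hg hgbd hgcen hindep h hh f hf
end

section
/- Let (Ω, 𝓕, μ) be a probability space, T : Ω → Ω an invertible bimeasurable measure-preserving transformation, and F ∈ 𝓕 a set such that the sets T^j F, 0 ≤ j ≤ N−1, are pairwise disjoint, where N is a positive integer. Let 1 ≤ n ≤ N and set A = ⋃_{j=0}^{N−n} T^j F. Then for every integer 0 ≤ i ≤ n−1 one has μ(A \ T^{-i}A) ≤ i·μ(F), and consequently μ(⋂_{i=0}^{n-1} T^{-i}A) ≥ μ(A) − (n²/2)·μ(F). -/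
open MeasureTheory Set
open scoped ENNReal

/-- If the sets `T^j F`, `0 ≤ j ≤ N−1`, are pairwise disjoint and
`A = ⋃_{j=0}^{N−n} T^j F` (with `1 ≤ n ≤ N`), then `μ(A \ T^{-i}A) ≤ i·μ(F)` for
`0 ≤ i ≤ n−1`, and `μ(⋂_{i<n} T^{-i}A) ≥ μ(A) − (n²/2)·μ(F)`. -/
theorem stmt9 {Ω : Type*} [MeasurableSpace Ω] (μ : Measure Ω) [IsProbabilityMeasure μ]
    (T : Ω ≃ᵐ Ω) (hT : MeasurePreserving T μ μ)
    (F : Set Ω) (hF : MeasurableSet F) (N : ℕ) (hN : 1 ≤ N)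
    (hdisj : ∀ j j' : ℕ, j < N → j' < N → j ≠ j' →
      Disjoint ((⇑T)^[j] '' F) ((⇑T)^[j'] '' F))
    (n : ℕ) (hn1 : 1 ≤ n) (hnN : n ≤ N)
    (A : Set Ω) (hA : A = ⋃ j ∈ Finset.range (N - n + 1), (⇑T)^[j] '' F) :
    (∀ i : ℕ, i ≤ n - 1 → μ (A \ (⇑T)^[i] ⁻¹' A) ≤ (i : ℝ≥0∞) * μ F) ∧
      μ A - ENNReal.ofReal ((n : ℝ) ^ 2 / 2) * μ F ≤
        μ (⋂ i ∈ Finset.range n, (⇑T)^[i] ⁻¹' A) := by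
  have hTinj : ∀ i : ℕ, Function.Injective ((⇑T)^[i]) := fun i => T.injective.iterate i
  have himg : ∀ j : ℕ, μ ((⇑T)^[j] '' F) = μ F := by
    intro j
    have h1 : (⇑T)^[j] '' F = (⇑T.symm)^[j] ⁻¹' F := by
      exact congrFun (Set.image_eq_preimage_of_inverse
        (Function.LeftInverse.iterate (fun x => T.symm_apply_apply x) j)
        (Function.LeftInverse.iterate (fun x => T.apply_symm_apply x) j)) F
    rw [h1]
    exact ((hT.symm T).iterate j).measure_preimage hF.nullMeasurableSet
  have hpre : ∀ i k : ℕ, (⇑T)^[i] ⁻¹' ((⇑T)^[i + k] '' F) = (⇑T)^[k] '' F := by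
    intro i k
    rw [Function.iterate_add, Set.image_comp, Set.preimage_image_eq _ (hTinj i)]
  set M := N - n with hM
  -- the key estimate for every i
  have key : ∀ i : ℕ, μ (A \ (⇑T)^[i] ⁻¹' A) ≤ (i : ℝ≥0∞) * μ F := by
    intro i
    have hsub : A \ (⇑T)^[i] ⁻¹' A ⊆
        ⋃ j ∈ Finset.Ico (M + 1 - i) (M + 1), (⇑T)^[j] '' F := by
      intro x hx
      obtain ⟨hxA, hxP⟩ := hx
      rw [hA] at hxA
      simp only [Set.mem_iUnion, Finset.mem_range] at hxA
      obtain ⟨j, hj, hxj⟩ := hxA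
      have hjge : M + 1 - i ≤ j := by
        by_contra hlt
        push_neg at hlt
        apply hxP
        have hij : i + j < M + 1 := by omega
        have hmem : x ∈ (⇑T)^[i] ⁻¹' ((⇑T)^[i + j] '' F) := by
          rw [hpre i j]; exact hxj
        rw [hA, Set.preimage_iUnion₂]
        simp only [Set.mem_iUnion, Finset.mem_range]
        exact ⟨i + j, hij, hmem⟩
      simp only [Set.mem_iUnion, Finset.mem_Ico]
      exact ⟨j, ⟨hjge, hj⟩, hxj⟩
    calc μ (A \ (⇑T)^[i] ⁻¹' A)
        ≤ μ (⋃ j ∈ Finset.Ico (M + 1 - i) (M + 1), (⇑T)^[j] '' F) := measure_mono hsub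
      _ ≤ ∑ j ∈ Finset.Ico (M + 1 - i) (M + 1), μ ((⇑T)^[j] '' F) :=
          measure_biUnion_finset_le _ _
      _ = ∑ _j ∈ Finset.Ico (M + 1 - i) (M + 1), μ F := by
          exact Finset.sum_congr rfl fun j _ => himg j
      _ = ((Finset.Ico (M + 1 - i) (M + 1)).card : ℝ≥0∞) * μ F := by
          rw [Finset.sum_const, nsmul_eq_mul]
      _ ≤ (i : ℝ≥0∞) * μ F := by
          apply mul_le_mul_left
          rw [Nat.card_Ico]
          exact Nat.cast_le.mpr (by omega)
  refine ⟨fun i _ => key i, ?_⟩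
  set I := ⋂ i ∈ Finset.range n, (⇑T)^[i] ⁻¹' A with hI
  have hdiffsub : A \ I ⊆ ⋃ i ∈ Finset.range n, (A \ (⇑T)^[i] ⁻¹' A) := by
    intro x hx
    obtain ⟨hxA, hxI⟩ := hx
    rw [hI] at hxI
    simp only [Set.mem_iInter, not_forall] at hxI
    obtain ⟨i, hi, hxi⟩ := hxI
    exact Set.mem_biUnion hi ⟨hxA, hxi⟩
  have hsum : μ (A \ I) ≤ (((n * (n - 1) / 2 : ℕ)) : ℝ≥0∞) * μ F := by
    calc μ (A \ I) ≤ ∑ i ∈ Finset.range n, μ (A \ (⇑T)^[i] ⁻¹' A) :=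
          le_trans (measure_mono hdiffsub) (measure_biUnion_finset_le _ _)
      _ ≤ ∑ i ∈ Finset.range n, (i : ℝ≥0∞) * μ F :=
          Finset.sum_le_sum fun i _ => key i
      _ = (((n * (n - 1) / 2 : ℕ)) : ℝ≥0∞) * μ F := by
          rw [← Finset.sum_mul, ← Nat.cast_sum, Finset.sum_range_id]
  have hcast : (((n * (n - 1) / 2 : ℕ)) : ℝ≥0∞) ≤ ENNReal.ofReal ((n : ℝ) ^ 2 / 2) := by
    rw [← ENNReal.ofReal_natCast]
    apply ENNReal.ofReal_le_ofReal
    calc ((n * (n - 1) / 2 : ℕ) : ℝ) ≤ ((n * (n - 1) : ℕ) : ℝ) / ((2 : ℕ) : ℝ) :=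
          Nat.cast_div_le
      _ ≤ (n : ℝ) ^ 2 / 2 := by
          push_cast
          have h1 : ((n : ℝ) - 1) ≤ (n : ℝ) := by linarith
          have h2 : (0 : ℝ) ≤ (n : ℝ) := Nat.cast_nonneg n
          have : (n : ℝ) * ((n : ℕ) - 1 : ℕ) ≤ (n : ℝ) ^ 2 := by
            have : ((n - 1 : ℕ) : ℝ) ≤ (n : ℝ) := by exact_mod_cast Nat.sub_le n 1
            nlinarith
          linarith
  rw [tsub_le_iff_right]
  calc μ A ≤ μ (A ∩ I) + μ (A \ I) := measure_le_inter_add_diff μ A I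
    _ ≤ μ I + ENNReal.ofReal ((n : ℝ) ^ 2 / 2) * μ F := by
        apply add_le_add (measure_mono Set.inter_subset_right)
        exact le_trans hsum (mul_le_mul_left hcast _)
end

section
/- Let (Ω, 𝓕, μ) be a probability space. Let g : Ω → ℝ be a random variable whose law has density 1_{[-1,-1/2]} + 1_{[1/2,1]} with respect to Lebesgue measure. For k ≥ 0 set p_k = ((√2 − 1)/√2)·2^{-k/2}, and for positive constants L₁, L₂ set d_k = p_k/L₁ if k is even and d_k = p_k/L₂ if k is odd. Let (G_k)_{k≥0} be a measurable partition of Ω with μ(G_k) = p_k for all k, such that the σ-algebra σ(G_k : k ≥ 0) is independent of σ(g). Set h = Σ_{k=0}^∞ d_k·1_{G_k} and f = g·h. Then the law of f is absolutely continuous with respect to Lebesgue measure and admits a density bounded by L₁ + L₂. -/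
open MeasureTheory ProbabilityTheory Set
open scoped ENNReal

/-! On `G k` the variable `f` equals `d k * g`, so by independence the law of `f` is the mixture
`∑ₖ p k • law (d k * g)`. Up to a null set the law of `g` is uniform on `{1/2 < |y| ≤ 1}`, hence
`f` has density `∑ₖ (p k / d k) · 1{d k / 2 < |x| ≤ d k}`, where `p k / d k` is `L₁` or `L₂`
according to the parity of `k`. Since `p (k + 2) = p k / 2`, the `d k` of a fixed parity at least
halve from one to the next, so these half-open annuli are pairwise disjoint within a parity class
(the closed ones would overlap at an endpoint): at every `x` at most one even and one odd term of
the density is nonzero. -/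

theorem Real.map_const_mul_volume_withDensity {a : ℝ} (ha : a ≠ 0) {w : ℝ → ℝ≥0∞}
    (hw : Measurable w) :
    (volume.withDensity w).map (a * ·)
      = volume.withDensity fun x => ENNReal.ofReal |a⁻¹| * w (x / a) := by
  have hmul : Measurable fun x : ℝ => a * x := measurable_const_mul a
  ext A hA
  rw [Measure.map_apply hmul hA, withDensity_apply _ (hmul hA), withDensity_apply _ hA]
  conv_rhs => rw [← Real.smul_map_volume_mul_left ha]
  rw [Measure.restrict_smul, lintegral_smul_measure, setLIntegral_map hA
    (by fun_prop : Measurable fun x => ENNReal.ofReal |a⁻¹| * w (x / a)) hmul]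
  simp_rw [mul_div_cancel_left₀ _ ha]
  rw [lintegral_const_mul _ hw, smul_eq_mul, ← mul_assoc, ← ENNReal.ofReal_mul (abs_nonneg a),
    ← abs_mul, mul_inv_cancel₀ ha, abs_one, ENNReal.ofReal_one, one_mul]

theorem abs_div_mem_Ioc_iff {x d : ℝ} (hd : 0 < d) :
    |x / d| ∈ Ioc (1 / 2) 1 ↔ |x| ∈ Ioc (d / 2) d := by
  rw [abs_div, abs_of_pos hd, mem_Ioc, mem_Ioc, lt_div_iff₀ hd, div_le_one hd, one_div_mul_eq_div]

theorem Real.map_const_mul_withDensity_indicator_abs_preimage_Ioc {a : ℝ} (ha : 0 < a) :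
    (volume.withDensity (((|·|) ⁻¹' Ioc (1 / 2) 1).indicator 1)).map (a * ·)
      = volume.withDensity (((|·|) ⁻¹' Ioc (a / 2) a).indicator fun _ => ENNReal.ofReal a⁻¹) := by
  rw [Real.map_const_mul_volume_withDensity ha.ne'
    (measurable_one.indicator (measurableSet_Ioc.preimage measurable_abs))]
  classical
  congr with x
  simp only [indicator_apply, mem_preimage, abs_div_mem_Ioc_iff ha, abs_of_pos (inv_pos.2 ha),
    Pi.one_apply, mul_ite, mul_one, mul_zero]

theorem Ico_neg_union_Ioc_eq_abs_preimage {a b : ℝ} (ha : 0 ≤ a) :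
    Ico (-b) (-a) ∪ Ioc a b = (|·|) ⁻¹' Ioc a b := by
  ext y
  rcases le_or_gt 0 y with hy | hy <;>
    simp only [mem_union, mem_Ico, mem_Ioc, mem_preimage, abs_of_nonneg, abs_of_neg, hy] <;>
    constructor <;> grind

theorem Icc_neg_union_Icc_ae_eq_abs_preimage {μ : Measure ℝ} [NullSingletonClass μ] {a b : ℝ}
    (ha : 0 ≤ a) : (Icc (-b) (-a) ∪ Icc a b : Set ℝ) =ᵐ[μ] ((|·|) ⁻¹' Ioc a b : Set ℝ) := by
  rw [← Ico_neg_union_Ioc_eq_abs_preimage ha]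
  exact Ico_ae_eq_Icc.symm.union Ioc_ae_eq_Icc.symm

theorem tsum_indicator_apply_of_mem {ι Ω M : Type*} [AddCommMonoid M] [TopologicalSpace M]
    {G : ι → Set Ω} (hGdisj : Pairwise (Function.onFun Disjoint G)) (u : ι → Ω → M) {k : ι}
    {ω : Ω} (hω : ω ∈ G k) : ∑' j, (G j).indicator (u j) ω = u k ω := by
  rw [tsum_eq_single k fun j hj => indicator_of_notMem
    (fun hωj => disjoint_left.1 (hGdisj hj) hωj hω) _]
  exact indicator_of_mem hω _

theorem map_eq_sum_smul_map_of_indep_partition {Ω α β ι : Type*} [Countable ι]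
    [MeasurableSpace Ω] [MeasurableSpace α] [MeasurableSpace β] {μ : Measure Ω}
    {g : Ω → α} {f : Ω → β} {G : ι → Set Ω} {φ : ι → α → β} (hg : Measurable g)
    (hφ : ∀ i, Measurable (φ i)) (hGmeas : ∀ i, MeasurableSet (G i))
    (hGdisj : Pairwise (Function.onFun Disjoint G)) (hGcover : ⋃ i, G i = univ)
    (hindep : Indep (MeasurableSpace.generateFrom (range G)) (MeasurableSpace.comap g ‹_›) μ)
    (hf : ∀ i, ∀ ω ∈ G i, f ω = φ i (g ω)) :
    μ.map f = Measure.sum fun i => μ (G i) • (μ.map g).map (φ i) := by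
  have hpre : ∀ A, f ⁻¹' A = ⋃ i, G i ∩ g ⁻¹' (φ i ⁻¹' A) := by
    intro A
    ext ω
    obtain ⟨i, hi⟩ := mem_iUnion.1 (hGcover ▸ mem_univ ω : ω ∈ ⋃ i, G i)
    simp only [mem_preimage, mem_iUnion, mem_inter_iff]
    exact ⟨fun hω => ⟨i, hi, hf i ω hi ▸ hω⟩, fun ⟨j, hj, hω⟩ => hf j ω hj ▸ hω⟩
  have hfmeas : Measurable f := fun A hA =>
    hpre A ▸ .iUnion fun i => (hGmeas i).inter (hg (hφ i hA))
  ext A hA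
  rw [Measure.map_apply hfmeas hA, Measure.sum_apply _ hA, hpre, measure_iUnion
    (hGdisj.mono fun i j h => h.mono inter_subset_left inter_subset_left)
    fun i => (hGmeas i).inter (hg (hφ i hA))]
  congr with i
  rw [Measure.smul_apply, Measure.map_apply (hφ i) hA, Measure.map_apply hg (hφ i hA),
    smul_eq_mul]
  exact (Indep_iff _ _ μ).1 hindep _ _ (MeasurableSpace.measurableSet_generateFrom ⟨i, rfl⟩)
    ⟨_, hφ i hA, rfl⟩

theorem map_eq_withDensity_tsum_of_indep_partition {Ω : Type*} [MeasurableSpace Ω]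
    {μ : Measure Ω} {g f : Ω → ℝ} {G : ℕ → Set Ω} {d : ℕ → ℝ} (hg : Measurable g)
    (hglaw : μ.map g = volume.withDensity (((|·|) ⁻¹' Ioc (1 / 2) 1).indicator 1))
    (hd : ∀ k, 0 < d k) (hGmeas : ∀ k, MeasurableSet (G k))
    (hGdisj : Pairwise (Function.onFun Disjoint G)) (hGcover : ⋃ k, G k = univ)
    (hindep : Indep (MeasurableSpace.generateFrom (range G))
      (MeasurableSpace.comap g Real.measurableSpace) μ)
    (hf : ∀ k, ∀ ω ∈ G k, f ω = d k * g ω) :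
    μ.map f = volume.withDensity fun x => ∑' k,
      μ (G k) * ((|·|) ⁻¹' Ioc (d k / 2) (d k)).indicator (fun _ => ENNReal.ofReal (d k)⁻¹) x := by
  have hmeas : ∀ k, Measurable (((|·|) ⁻¹' Ioc (d k / 2) (d k)).indicator
      fun _ => ENNReal.ofReal (d k)⁻¹) := fun k =>
    measurable_const.indicator (measurableSet_Ioc.preimage measurable_abs)
  rw [map_eq_sum_smul_map_of_indep_partition hg (fun k => measurable_const_mul (d k)) hGmeas
    hGdisj hGcover hindep hf, hglaw]
  simp_rw [Real.map_const_mul_withDensity_indicator_abs_preimage_Ioc (hd _),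
    ← withDensity_smul _ (hmeas _)]
  rw [← withDensity_tsum fun k => (hmeas k).const_smul _]
  congr with x
  simp only [ENNReal.tsum_apply, Pi.smul_apply, smul_eq_mul]

theorem ENNReal.tsum_le_of_subsingleton_support {ι : Type*} {a : ι → ℝ≥0∞} {c : ℝ≥0∞}
    (hs : (Function.support a).Subsingleton) (ha : ∀ i, a i ≤ c) : ∑' i, a i ≤ c := by
  rcases hs.eq_empty_or_singleton with h | ⟨i, h⟩
  · simp [Function.support_eq_empty_iff.1 h]
  · rw [tsum_eq_single i fun j hj => Function.notMem_support.1 (h ▸ hj)]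
    exact ha i

theorem ENNReal.tsum_le_add_of_subsingleton_support {ι : Type*} (P : ι → Prop) {a : ι → ℝ≥0∞}
    {c₁ c₂ : ℝ≥0∞} (h₁ : ∀ i, P i → a i ≤ c₁) (h₂ : ∀ i, ¬P i → a i ≤ c₂)
    (hs₁ : {i | P i ∧ a i ≠ 0}.Subsingleton) (hs₂ : {i | ¬P i ∧ a i ≠ 0}.Subsingleton) :
    ∑' i, a i ≤ c₁ + c₂ := by
  rw [← Set.indicator_self_add_compl {i | P i} a, Pi.add_def, ENNReal.tsum_add]
  refine add_le_add (tsum_le_of_subsingleton_support ?_ fun i => ?_)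
    (tsum_le_of_subsingleton_support ?_ fun i => ?_)
  · rwa [Set.support_indicator]
  · by_cases hi : P i <;> simp [hi, h₁]
  · rwa [Set.support_indicator]
  · by_cases hi : P i <;> simp [hi, h₂]

theorem subsingleton_setOf_mem_Ioc_of_halving {s : Set ℕ} {d : ℕ → ℝ}
    (hd : ∀ k ∈ s, ∀ j ∈ s, k < j → d j ≤ d k / 2) (r : ℝ) :
    {k | k ∈ s ∧ r ∈ Ioc (d k / 2) (d k)}.Subsingleton := by
  rintro k ⟨hk, hrk⟩ j ⟨hj, hrj⟩
  by_contra hne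
  rcases lt_or_gt_of_ne hne with h | h
  · linarith [hd k hk j hj h, hrk.1, hrj.2]
  · linarith [hd j hj k hk h, hrj.1, hrk.2]

theorem tsum_mul_indicator_abs_preimage_Ioc_le {w : ℕ → ℝ≥0∞} {d : ℕ → ℝ} {c₁ c₂ : ℝ≥0∞}
    (hw : ∀ k, w k * ENNReal.ofReal (d k)⁻¹ ≤ if Even k then c₁ else c₂)
    (hhalving : ∀ k j, k < j → (Even k ↔ Even j) → d j ≤ d k / 2) (x : ℝ) :
    ∑' k, w k * ((|·|) ⁻¹' Ioc (d k / 2) (d k)).indicator (fun _ => ENNReal.ofReal (d k)⁻¹) x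
      ≤ c₁ + c₂ := by
  have hterm : ∀ k, w k * ((|·|) ⁻¹' Ioc (d k / 2) (d k)).indicator
      (fun _ => ENNReal.ofReal (d k)⁻¹) x ≤ if Even k then c₁ else c₂ := fun k =>
    (mul_le_mul_right (indicator_le_self _ _ x) _).trans (hw k)
  have hsupport : ∀ P : ℕ → Prop, (∀ k j, P k → P j → (Even k ↔ Even j)) →
      Set.Subsingleton {k | P k ∧ w k * ((|·|) ⁻¹' Ioc (d k / 2) (d k)).indicator
        (fun _ => ENNReal.ofReal (d k)⁻¹) x ≠ 0} := fun P hP =>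
    (subsingleton_setOf_mem_Ioc_of_halving (s := {k | P k})
      (fun k hk j hj hkj => hhalving k j hkj (hP k j hk hj)) |x|).anti
      fun k ⟨hk, hne⟩ => ⟨hk, (mem_of_indicator_ne_zero (right_ne_zero_of_mul hne) :
        x ∈ (|·|) ⁻¹' Ioc (d k / 2) (d k))⟩
  refine ENNReal.tsum_le_add_of_subsingleton_support Even (fun k hk => ?_) (fun k hk => ?_)
    (hsupport _ fun k j => iff_of_true) (hsupport _ fun k j => iff_of_false)
  · simpa [hk] using hterm k
  · simpa [hk] using hterm k

theorem mul_two_rpow_neg_half_le {c : ℝ} (hc : 0 ≤ c) {k j : ℕ} (h : k + 2 ≤ j) :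
    c * 2 ^ (-(j : ℝ) / 2) ≤ c * 2 ^ (-(k : ℝ) / 2) / 2 := by
  rw [mul_div_assoc, ← Real.rpow_sub_one two_ne_zero]
  gcongr
  · norm_num
  · have : (k : ℝ) + 2 ≤ j := by exact_mod_cast h
    linarith

theorem le_half_of_lt_of_even_iff {c L₁ L₂ : ℝ} (hc : 0 ≤ c) (hL₁ : 0 ≤ L₁) (hL₂ : 0 ≤ L₂)
    {p d : ℕ → ℝ} (hp : ∀ k, p k = c * 2 ^ (-(k : ℝ) / 2))
    (hd : ∀ k, d k = if Even k then p k / L₁ else p k / L₂) {k j : ℕ} (hkj : k < j)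
    (hpar : Even k ↔ Even j) : d j ≤ d k / 2 := by
  have hkj2 : k + 2 ≤ j := by
    by_contra! hlt
    obtain rfl : j = k + 1 := by omega
    exact iff_not_self (hpar.trans Nat.even_add_one)
  have hpj : p j ≤ p k / 2 := by rw [hp, hp]; exact mul_two_rpow_neg_half_le hc hkj2
  simp only [hd, ← hpar]
  split_ifs <;> rw [div_right_comm] <;> exact div_le_div_of_nonneg_right hpj ‹_›

theorem stmt10_general {Ω : Type*} [MeasurableSpace Ω] (μ : Measure Ω)
    (g : Ω → ℝ) (hg : Measurable g)
    (hglaw : μ.map g = volume.withDensity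
      ((Set.Icc (-1 : ℝ) (-(1/2)) ∪ Set.Icc (1/2) 1).indicator 1))
    (L₁ L₂ : ℝ) (hL₁ : 0 < L₁) (hL₂ : 0 < L₂)
    (p d : ℕ → ℝ)
    (hp : ∀ k, p k = ((Real.sqrt 2 - 1) / Real.sqrt 2) * (2 : ℝ) ^ (-(k : ℝ) / 2))
    (hd : ∀ k, d k = if Even k then p k / L₁ else p k / L₂)
    (G : ℕ → Set Ω) (hGmeas : ∀ k, MeasurableSet (G k))
    (hGdisj : Pairwise (Function.onFun Disjoint G)) (hGcover : ⋃ k, G k = Set.univ)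
    (hGmass : ∀ k, μ (G k) = ENNReal.ofReal (p k))
    (hGindep : Indep (MeasurableSpace.generateFrom (Set.range G))
      (MeasurableSpace.comap g Real.measurableSpace) μ)
    (h f : Ω → ℝ)
    (hh : ∀ ω, h ω = ∑' k, (G k).indicator (fun _ => d k) ω)
    (hf : ∀ ω, f ω = g ω * h ω) :
    ∃ ρ : ℝ → ℝ≥0∞, μ.map f = volume.withDensity ρ ∧
      ∀ x, ρ x ≤ ENNReal.ofReal (L₁ + L₂) := by
  have hc : 0 < (Real.sqrt 2 - 1) / Real.sqrt 2 := by
    have : 1 < Real.sqrt 2 := by simpa using Real.sqrt_lt_sqrt zero_le_one one_lt_two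
    exact div_pos (by linarith) (by linarith)
  have hppos : ∀ k, 0 < p k := fun k => hp k ▸ mul_pos hc (by positivity)
  have hdpos : ∀ k, 0 < d k := fun k => by
    rw [hd k]; split_ifs <;> exact div_pos (hppos k) ‹_›
  have hglaw' : μ.map g = volume.withDensity (((|·|) ⁻¹' Ioc (1 / 2) 1).indicator 1) :=
    hglaw.trans <| withDensity_congr_ae <| indicator_ae_eq_of_ae_eq_set <|
      Icc_neg_union_Icc_ae_eq_abs_preimage (by norm_num)
  refine ⟨_, map_eq_withDensity_tsum_of_indep_partition hg hglaw' hdpos hGmeas hGdisj hGcover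
    hGindep fun k ω hω => ?_, fun x => ?_⟩
  · rw [hf, hh, tsum_indicator_apply_of_mem hGdisj _ hω, mul_comm]
  rw [ENNReal.ofReal_add hL₁.le hL₂.le]
  refine tsum_mul_indicator_abs_preimage_Ioc_le (fun k => ?_)
    (fun k j => le_half_of_lt_of_even_iff hc.le hL₁.le hL₂.le hp hd) x
  rw [hGmass, ← ENNReal.ofReal_mul (hppos k).le, ← div_eq_mul_inv, hd k]
  split_ifs <;> rw [div_div_cancel₀ (hppos k).ne']

/-- If `g` has density `1_{[-1,-1/2]} + 1_{[1/2,1]}`, `(G_k)` is a measurable partition of `Ω`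
with `μ(G_k) = p_k`, independent of `σ(g)`, and `f = g·h` with `h = Σ_k d_k·1_{G_k}`, where
`p_k = ((√2−1)/√2)·2^{-k/2}` and `d_k = p_k/L₁` (`k` even), `d_k = p_k/L₂` (`k` odd),
then the law of `f` is absolutely continuous with a density bounded by `L₁ + L₂`. -/
theorem stmt10 {Ω : Type*} [MeasurableSpace Ω] (μ : Measure Ω) [IsProbabilityMeasure μ]
    (g : Ω → ℝ) (hg : Measurable g)
    (hglaw : μ.map g = volume.withDensity
      ((Set.Icc (-1 : ℝ) (-(1/2)) ∪ Set.Icc (1/2) 1).indicator 1))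
    (L₁ L₂ : ℝ) (hL₁ : 0 < L₁) (hL₂ : 0 < L₂)
    (p d : ℕ → ℝ)
    (hp : ∀ k, p k = ((Real.sqrt 2 - 1) / Real.sqrt 2) * (2 : ℝ) ^ (-(k : ℝ) / 2))
    (hd : ∀ k, d k = if Even k then p k / L₁ else p k / L₂)
    (G : ℕ → Set Ω) (hGmeas : ∀ k, MeasurableSet (G k))
    (hGdisj : Pairwise (Function.onFun Disjoint G)) (hGcover : ⋃ k, G k = Set.univ)
    (hGmass : ∀ k, μ (G k) = ENNReal.ofReal (p k))
    (hGindep : Indep (MeasurableSpace.generateFrom (Set.range G))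
      (MeasurableSpace.comap g Real.measurableSpace) μ)
    (h f : Ω → ℝ)
    (hh : ∀ ω, h ω = ∑' k, (G k).indicator (fun _ => d k) ω)
    (hf : ∀ ω, f ω = g ω * h ω) :
    ∃ ρ : ℝ → ℝ≥0∞, μ.map f = volume.withDensity ρ ∧
      ∀ x, ρ x ≤ ENNReal.ofReal (L₁ + L₂) :=
  stmt10_general μ g hg hglaw L₁ L₂ hL₁ hL₂ p d hp hd G hGmeas hGdisj hGcover hGmass hGindep h f hh
    hf
end
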